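/- For u ∈ ℂ, u ≠ 0, and D ∈ {1, −1}, define 4×4 complex matrices A = [[1, −(D⁻²+D⁻¹+1), (D⁻²+D⁻¹+1)u, −u], [0, −1, (D⁻¹+1)u, −u], [0, 0, u, −u], [0, 0, 0, −u]] and B = [[−u, 0, 0, 0], [−u, u, 0, 0], [−D, D+1, −1, 0], [−D³, D³+D²+D, −D²−D−1, 1]]. If u is a primitive n-th root of unity with n ∉ {1, 2, 3, 4, 5, 6, 10}, then the subgroup of GL(4,ℂ) generated by A and B is infinite. -/

import Mathlib

/-- The `A` matrix of the 4-dimensional Tuba–Wenzl representation, normalized with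
eigenvalues `{±u, ±1}`. -/
noncomputable def twA (u D : ℂ) : Matrix (Fin 4) (Fin 4) ℂ :=
  !![1, -(D⁻¹ ^ 2 + D⁻¹ + 1), (D⁻¹ ^ 2 + D⁻¹ + 1) * u, -u;
     0, -1, (D⁻¹ + 1) * u, -u;
     0, 0, u, -u;
     0, 0, 0, -u]

/-- The `B` matrix of the 4-dimensional Tuba–Wenzl representation. -/
def twB (u D : ℂ) : Matrix (Fin 4) (Fin 4) ℂ :=
  !![-u, 0, 0, 0;
     -u, u, 0, 0;
     -D, D + 1, -1, 0;
     -D ^ 3, D ^ 3 + D ^ 2 + D, -D ^ 2 - D - 1, 1]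

/-- The subgroup of `GL(4, ℂ)` generated by the (invertible) matrices `A` and `B`. -/
def matGenGroup (A B : Matrix (Fin 4) (Fin 4) ℂ) :
    Subgroup (Matrix (Fin 4) (Fin 4) ℂ)ˣ :=
  Subgroup.closure {g : (Matrix (Fin 4) (Fin 4) ℂ)ˣ |
    (g : Matrix (Fin 4) (Fin 4) ℂ) = A ∨ (g : Matrix (Fin 4) (Fin 4) ℂ) = B}

/-!
Suppose the group is finite. If `u` is not a root of unity, `det A = u²` already has infinite
order. Otherwise `N := A B⁻¹` has some finite order `m`. Its entries lie in `ℚ(u)`, so comparing the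
embeddings `ℚ(ζₙ) → ℂ` with `ζₙ ↦ u` and `ζₙ ↦ z` shows `N(z)ᵐ = 1` for every primitive `z`, hence
`N(z)³` has eigenvalues on the unit circle and `|tr N(z)³| ≤ 4`. But
`tr N(z)³ = -2x³ + 6x² - 4` with `x = D (z + z⁻¹)`, which exceeds `4` as soon as `x < -1`. For
`n ≥ 7` such a `z` is `e^{2πi/n}` when `D = -1`, and `e^{2πik/n}` with `n/3 < k < n/2` coprime to
`n` when `D = 1`; the latter `k` exists unless `n = 10`.
-/

open Matrix Polynomial Complex
open scoped Real

theorem Matrix.norm_trace_le_of_pow_eq_one {ι : Type*} [Fintype ι] [DecidableEq ι]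
    {M : Matrix ι ι ℂ} {m : ℕ} (hm : m ≠ 0) (hM : M ^ m = 1) :
    ‖M.trace‖ ≤ Fintype.card ι := by
  have hroot : ∀ x ∈ M.charpoly.roots, ‖x‖ = 1 := by
    intro x hx
    have hx : x ∈ spectrum ℂ M :=
      mem_spectrum_iff_isRoot_charpoly.2 (isRoot_of_mem_roots hx)
    have hxm : x ^ m ∈ spectrum ℂ (M ^ m) := spectrum.pow_image_subset M m ⟨x, hx, rfl⟩
    rw [hM, spectrum.mem_iff, ← map_one (algebraMap ℂ (Matrix ι ι ℂ)), ← map_sub] at hxm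
    refine norm_eq_one_of_pow_eq_one (sub_eq_zero.1 ?_) hm
    by_contra h
    exact hxm ((Ne.isUnit h).map _)
  calc ‖M.trace‖ = ‖M.charpoly.roots.sum‖ := by rw [trace_eq_sum_roots_charpoly]
    _ ≤ (M.charpoly.roots.map (‖·‖)).sum := norm_multiset_sum_le _
    _ = Multiset.card M.charpoly.roots := by
      rw [Multiset.map_congr rfl hroot, Multiset.map_const', Multiset.sum_replicate, nsmul_one]
    _ ≤ M.charpoly.natDegree := by exact_mod_cast card_roots' _
    _ = Fintype.card ι := by rw [charpoly_natDegree_eq_dim]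

theorem Matrix.map_pow_eq_one_iff {ι R S : Type*} [Fintype ι] [DecidableEq ι] [Semiring R]
    [Semiring S] {f : R →+* S} (hf : Function.Injective f) {M : Matrix ι ι R} {m : ℕ} :
    (M.map f) ^ m = 1 ↔ M ^ m = 1 := by
  rw [← RingHom.mapMatrix_apply, ← map_pow, ← (RingHom.mapMatrix f).map_one]
  exact (Matrix.map_injective hf).eq_iff

theorem Subgroup.isOfFinOrder_of_finite_of_mem {G : Type*} [Group G] {H : Subgroup G}
    (hH : (H : Set G).Finite) {g : G} (hg : g ∈ H) : IsOfFinOrder g :=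
  have : Finite H := hH.to_subtype
  H.subtype.isOfFinOrder (isOfFinOrder_of_finite (⟨g, hg⟩ : H))

theorem Nat.exists_coprime_third_lt_lt_half (n : ℕ) (h7 : 7 ≤ n) (h10 : n ≠ 10) :
    ∃ k : ℕ, k.Coprime n ∧ n < 3 * k ∧ 2 * k < n := by
  -- `k` is coprime to `n = r + 2 k` as soon as it is coprime to `r`; take `r ∈ {1, 2, 4}`.
  have hk : ∀ {k r : ℕ}, k.Coprime r → n = r + 2 * k → k.Coprime n := by
    rintro k r h rfl
    exact (Nat.coprime_add_mul_right_right k r 2).2 h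
  have hodd : ∀ {i : ℕ}, 0 < i → (2 * i - 1).Coprime 2 :=
    fun {i} hi => Nat.coprime_two_right.2 ⟨i - 1, by omega⟩
  rcases Nat.even_or_odd' n with ⟨j, rfl | rfl⟩
  · rcases Nat.even_or_odd' j with ⟨i, rfl | rfl⟩
    · exact ⟨2 * i - 1, hk (hodd (by omega)) (by omega), by omega, by omega⟩
    · exact ⟨2 * i - 1, hk ((hodd (by omega)).pow_right 2) (by omega), by omega, by omega⟩
  · exact ⟨j, hk (Nat.coprime_one_right j) (by omega), by omega, by omega⟩

theorem Complex.isPrimitiveRoot_exp_ofReal_mul_I {k n : ℕ} (hn : n ≠ 0) (hk : k.Coprime n) :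
    IsPrimitiveRoot (exp (↑(2 * π * k / n) * I)) n := by
  convert isPrimitiveRoot_exp_of_coprime k n hn hk using 2
  push_cast
  ring

theorem Complex.exp_ofReal_mul_I_add_inv (θ : ℝ) :
    exp (θ * I) + (exp (θ * I))⁻¹ = ↑(2 * Real.cos θ) := by
  rw [← exp_neg, ← neg_mul, ← two_cos, ofReal_mul, ofReal_cos, ofReal_ofNat]

theorem Real.one_half_lt_cos {y : ℝ} (h0 : 0 ≤ y) (h : y < π / 3) : 1 / 2 < Real.cos y := by
  simpa [Real.cos_pi_div_three] using
    Real.cos_lt_cos_of_nonneg_of_le_pi h0 (by linarith [Real.pi_pos]) h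

theorem exists_isPrimitiveRoot_mul_add_inv_lt {n : ℕ} (h7 : 7 ≤ n) (h10 : n ≠ 10) {d : ℤ}
    (hd : d = 1 ∨ d = -1) : ∃ z : ℂ, IsPrimitiveRoot z n ∧ ∃ x : ℝ, d * (z + z⁻¹) = x ∧ x < -1 := by
  suffices ∃ k : ℕ, k.Coprime n ∧ d * Real.cos (2 * π * k / n) < -(1 / 2) by
    obtain ⟨k, hk, hcos⟩ := this
    refine ⟨_, isPrimitiveRoot_exp_ofReal_mul_I (by omega) hk, d * (2 * Real.cos (2 * π * k / n)),
      by rw [exp_ofReal_mul_I_add_inv]; push_cast; rfl, by linarith⟩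
  have hn : (7 : ℝ) ≤ n := by exact_mod_cast h7
  have hπ := Real.pi_pos
  rcases hd with rfl | rfl
  · obtain ⟨k, hk, h3, h2⟩ := Nat.exists_coprime_third_lt_lt_half n h7 h10
    have h3 : (n : ℝ) < 3 * k := by exact_mod_cast h3
    have h2 : 2 * (k : ℝ) < n := by exact_mod_cast h2
    have hcos := Real.one_half_lt_cos (y := π - 2 * π * k / n)
      (by rw [sub_nonneg, div_le_iff₀ (by linarith)]; nlinarith)
      (by rw [sub_lt_comm, lt_div_iff₀ (by linarith)]; nlinarith)
    rw [Real.cos_pi_sub] at hcos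
    exact ⟨k, hk, by push_cast; linarith⟩
  · have hcos := Real.one_half_lt_cos (y := 2 * π * (1 : ℕ) / n) (by positivity)
      (by rw [div_lt_iff₀ (by linarith)]; push_cast; nlinarith)
    exact ⟨1, Nat.coprime_one_left n, by push_cast at hcos ⊢; linarith⟩

-- `twA w D * (twB w D)⁻¹` for `D = ±1`; the sign is an integer so that `twN` commutes with ring
-- homomorphisms.
noncomputable def twN {F : Type*} [Field F] (w : F) (d : ℤ) : Matrix (Fin 4) (Fin 4) F :=
  !![(d + 1) * (w⁻¹ - 1), 1 - 2 * w⁻¹ + d * (2 - w⁻¹), 0, -w;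
     w⁻¹ - d, d - w⁻¹, w, -w;
     0, -1, (1 + d) * w, -w;
     1, -2 - d, (2 + d) * w, -w]

theorem twN_map {F K : Type*} [Field F] [Field K] (f : F →+* K) (w : F) (d : ℤ) :
    (twN w d).map f = twN (f w) d := by
  ext i j
  fin_cases i <;> fin_cases j <;> simp [twN, map_ofNat]

theorem twA_eq_twN_mul_twB {u : ℂ} (hu : u ≠ 0) {d : ℤ} (hd : d = 1 ∨ d = -1) :
    twA u d = twN u d * twB u d := by
  rcases hd with rfl | rfl <;>
  · ext i j
    fin_cases i <;> fin_cases j <;>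
      simp [twA, twB, twN, mul_apply, Fin.sum_univ_four] <;> field_simp <;> ring

theorem trace_twN_pow_three {F : Type*} [Field F] {w : F} (hw : w ≠ 0) {d : ℤ}
    (hd : d = 1 ∨ d = -1) :
    (twN w d ^ 3).trace = -2 * (d * (w + w⁻¹)) ^ 3 + 6 * (d * (w + w⁻¹)) ^ 2 - 4 := by
  rcases hd with rfl | rfl <;>
  · simp [pow_succ, twN, trace, Fin.sum_univ_four]
    field_simp
    ring

theorem det_twA (u D : ℂ) : (twA u D).det = u ^ 2 := by
  simp [twA, det_succ_column_zero, Fin.sum_univ_succ]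
  ring

theorem det_twB (u D : ℂ) : (twB u D).det = u ^ 2 := by
  simp [twB, det_succ_row_zero, Fin.sum_univ_succ]
  ring

theorem twN_pow_eq_one_iff {n : ℕ} (hn : 0 < n) {u z : ℂ} (hu : IsPrimitiveRoot u n)
    (hz : IsPrimitiveRoot z n) (d : ℤ) (m : ℕ) : twN u d ^ m = 1 ↔ twN z d ^ m = 1 := by
  have := Fact.mk (cyclotomic.irreducible_rat hn)
  -- Both are specializations of `twN ζ d` over `ℚ(ζ) = ℚ[X] ⧸ Φₙ`, and maps out of a field are
  -- injective.
  have key : ∀ {x : ℂ}, IsPrimitiveRoot x n →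
      (twN x d ^ m = 1 ↔ twN (AdjoinRoot.root (cyclotomic n ℚ)) d ^ m = 1) := by
    intro x hx
    have hfx : (cyclotomic n ℚ).eval₂ (algebraMap ℚ ℂ) x = 0 := by
      rw [eval₂_eq_eval_map, map_cyclotomic]
      exact hx.isRoot_cyclotomic hn
    rw [← map_pow_eq_one_iff (AdjoinRoot.lift _ x hfx).injective, twN_map, AdjoinRoot.lift_root]
  rw [key hu, key hz]

theorem not_isOfFinOrder_twN {n : ℕ} (h7 : 7 ≤ n) (h10 : n ≠ 10) {u : ℂ}
    (hu : IsPrimitiveRoot u n) {d : ℤ} (hd : d = 1 ∨ d = -1) : ¬IsOfFinOrder (twN u d) := by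
  rw [isOfFinOrder_iff_pow_eq_one]
  rintro ⟨m, hm, hNm⟩
  obtain ⟨z, hz, x, hx, hx1⟩ := exists_isPrimitiveRoot_mul_add_inv_lt h7 h10 hd
  rw [twN_pow_eq_one_iff (by omega) hu hz] at hNm
  have hbound := norm_trace_le_of_pow_eq_one (M := twN z d ^ 3) hm.ne'
    (by rw [← pow_mul, mul_comm, pow_mul, hNm, one_pow])
  have htrace : (twN z d ^ 3).trace = ((-2 * x ^ 3 + 6 * x ^ 2 - 4 : ℝ) : ℂ) := by
    rw [trace_twN_pow_three (hz.ne_zero (by omega)) hd, hx]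
    push_cast
    ring
  rw [htrace, norm_real, Real.norm_eq_abs, Fintype.card_fin, Nat.cast_ofNat] at hbound
  -- `-2x³ + 6x² - 4 - 4 = -2 (x + 1) (x - 2)²`
  nlinarith [le_abs_self (-2 * x ^ 3 + 6 * x ^ 2 - 4 : ℝ),
    mul_pos (by linarith : 0 < -(x + 1)) (by nlinarith : 0 < (x - 2) ^ 2)]

theorem stmt8 (u D : ℂ) (hu : u ≠ 0) (hD : D = 1 ∨ D = -1) (n : ℕ)
    (hprim : IsPrimitiveRoot u n) (hn : n ∉ ({1, 2, 3, 4, 5, 6, 10} : Set ℕ)) :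
    Set.Infinite (matGenGroup (twA u D) (twB u D) : Set (Matrix (Fin 4) (Fin 4) ℂ)ˣ) := by
  obtain ⟨d, hd, rfl⟩ : ∃ d : ℤ, (d = 1 ∨ d = -1) ∧ D = d := by
    rcases hD with rfl | rfl
    exacts [⟨1, by simp⟩, ⟨-1, by simp⟩]
  set G := matGenGroup (twA u d) (twB u d)
  have hdet : IsUnit (u ^ 2) := (pow_ne_zero 2 hu).isUnit
  obtain ⟨a, ha⟩ : IsUnit (twA u d) := by rw [isUnit_iff_isUnit_det, det_twA]; exact hdet
  obtain ⟨b, hb⟩ : IsUnit (twB u d) := by rw [isUnit_iff_isUnit_det, det_twB]; exact hdet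
  have haG : a ∈ G := Subgroup.subset_closure (Or.inl ha)
  have hbG : b ∈ G := Subgroup.subset_closure (Or.inr hb)
  intro hfin
  have hfo : ∀ g ∈ G, IsOfFinOrder (g : Matrix (Fin 4) (Fin 4) ℂ) := fun g hg =>
    Units.isOfFinOrder_val.2 (Subgroup.isOfFinOrder_of_finite_of_mem hfin hg)
  rcases Nat.eq_zero_or_pos n with rfl | hn0
  · have hA := (detMonoidHom : Matrix (Fin 4) (Fin 4) ℂ →* ℂ).isOfFinOrder (hfo a haG)
    rw [coe_detMonoidHom, ha, det_twA] at hA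
    exact orderOf_eq_zero_iff.1 hprim.eq_orderOf.symm (hA.of_pow two_ne_zero)
  · have hab : ((a * b⁻¹ : (Matrix (Fin 4) (Fin 4) ℂ)ˣ) : Matrix (Fin 4) (Fin 4) ℂ) =
        twN u d := by
      rw [Units.val_mul, ha, twA_eq_twN_mul_twB hu hd, ← hb, Units.mul_inv_cancel_right]
    simp only [Set.mem_insert_iff, Set.mem_singleton_iff] at hn
    exact not_isOfFinOrder_twN (by omega) (by omega) hprim hd
      (hab ▸ hfo _ (mul_mem haG (inv_mem hbG)))
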